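/- arXiv:2111.09951 — 2 statements merged into one kernel-verified Lean document; each statement's English description precedes it below -/
import Mathlib

section
/- The single-step upwind update u_new = u + Δt (1 + min over controls of the upwind differences) is monotone: if the CFL condition Δt((1+Wd)/Δx + (1+Wd)/Δy + W/Δθ) ≤ 1 holds, then the updated value u^n_{ijk} is a nondecreasing function of each of the neighboring grid values u^{n+1} appearing in the formula. -/
open Real

/-- Integer sign of a real number: 1 if positive, −1 if negative, 0 if zero. -/
noncomputable def isign (a : ℝ) : ℤ := if 0 < a then 1 else if a < 0 then -1 else 0

/-- The upwind difference D(v,ω) for grid function U at node (i,j,k) with angle θk. -/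
noncomputable def upwindD (W d θk Δx Δy Δθ : ℝ) (U : ℤ → ℤ → ℤ → ℝ) (i j k : ℤ)
    (v ω : ℝ) : ℝ :=
  |v * Real.cos θk - ω * W * d * Real.sin θk| *
      (U (i + isign (v * Real.cos θk - ω * W * d * Real.sin θk)) j k - U i j k) / Δx
  + |v * Real.sin θk + ω * W * d * Real.cos θk| *
      (U i (j + isign (v * Real.sin θk + ω * W * d * Real.cos θk)) k - U i j k) / Δy
  + |ω| * W * (U i j (k + isign ω) - U i j k) / Δθ

/-- The single-step upwind update at node (i,j,k). -/
noncomputable def upwindUpdate (W d θk Δx Δy Δθ Δt : ℝ) (U : ℤ → ℤ → ℤ → ℝ)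
    (i j k : ℤ) : ℝ :=
  U i j k + Δt * (1 + sInf {z : ℝ | ∃ v ∈ ({-1, 0, 1} : Set ℝ), ∃ ω ∈ ({-1, 0, 1} : Set ℝ),
    z = upwindD W d θk Δx Δy Δθ U i j k v ω})


lemma upwind_key (W d θk Δx Δy Δθ Δt : ℝ)
    (hW : 0 < W) (hd : 0 < d) (hΔx : 0 < Δx) (hΔy : 0 < Δy) (hΔθ : 0 < Δθ) (hΔt : 0 < Δt)
    (hCFL : Δt * ((1 + W * d) / Δx + (1 + W * d) / Δy + W / Δθ) ≤ 1)
    (U V : ℤ → ℤ → ℤ → ℝ) (hUV : ∀ i j k, U i j k ≤ V i j k) (i j k : ℤ)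
    (v ω : ℝ) (hv : |v| ≤ 1) (hω : |ω| ≤ 1) :
    U i j k + Δt * upwindD W d θk Δx Δy Δθ U i j k v ω ≤
      V i j k + Δt * upwindD W d θk Δx Δy Δθ V i j k v ω := by
  set A := v * Real.cos θk - ω * W * d * Real.sin θk with hA
  set B := v * Real.sin θk + ω * W * d * Real.cos θk with hB
  have hAle : |A| ≤ 1 + W * d := by
    calc |A| ≤ |v * Real.cos θk| + |ω * W * d * Real.sin θk| := abs_sub _ _
    _ ≤ 1 + W * d := by
      rw [abs_mul, abs_mul, abs_mul, abs_mul]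
      have h1 := abs_cos_le_one θk
      have h2 := abs_sin_le_one θk
      rw [abs_of_pos hW, abs_of_pos hd]
      have e1 : |v| * |Real.cos θk| ≤ 1 * 1 := by gcongr <;> simp [abs_cos_le_one]
      have e2 : |ω| * W * d * |Real.sin θk| ≤ 1 * W * d * 1 := by
        gcongr <;> simp [abs_sin_le_one, hω]
      nlinarith
  have hBle : |B| ≤ 1 + W * d := by
    calc |B| ≤ |v * Real.sin θk| + |ω * W * d * Real.cos θk| := abs_add_le _ _
    _ ≤ 1 + W * d := by
      rw [abs_mul, abs_mul, abs_mul, abs_mul]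
      have h1 := abs_cos_le_one θk
      have h2 := abs_sin_le_one θk
      rw [abs_of_pos hW, abs_of_pos hd]
      have e1 : |v| * |Real.sin θk| ≤ 1 * 1 := by gcongr <;> simp [abs_sin_le_one]
      have e2 : |ω| * W * d * |Real.cos θk| ≤ 1 * W * d * 1 := by
        gcongr <;> simp [abs_cos_le_one, hω]
      nlinarith
  set C : ℝ := 1 - Δt * (|A| / Δx + |B| / Δy + |ω| * W / Δθ) with hC
  have hCpos : 0 ≤ C := by
    have h1 : |A| / Δx ≤ (1 + W * d) / Δx := by gcongr
    have h2 : |B| / Δy ≤ (1 + W * d) / Δy := by gcongr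
    have h3 : |ω| * W / Δθ ≤ W / Δθ := by
      gcongr
      nlinarith [abs_nonneg ω]
    have : Δt * (|A| / Δx + |B| / Δy + |ω| * W / Δθ) ≤
        Δt * ((1 + W * d) / Δx + (1 + W * d) / Δy + W / Δθ) := by
      apply mul_le_mul_of_nonneg_left (by linarith) hΔt.le
    simp only [hC]; linarith
  have k1 : (0:ℝ) ≤ Δt * |A| / Δx := by positivity
  have k2 : (0:ℝ) ≤ Δt * |B| / Δy := by positivity
  have k3 : (0:ℝ) ≤ Δt * (|ω| * W) / Δθ := by positivity
  have e0 := mul_le_mul_of_nonneg_left (hUV i j k) hCpos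
  have e1 := mul_le_mul_of_nonneg_left (hUV (i + isign A) j k) k1
  have e2 := mul_le_mul_of_nonneg_left (hUV i (j + isign B) k) k2
  have e3 := mul_le_mul_of_nonneg_left (hUV i j (k + isign ω)) k3
  have expand : ∀ F : ℤ → ℤ → ℤ → ℝ,
      F i j k + Δt * upwindD W d θk Δx Δy Δθ F i j k v ω =
      C * F i j k + Δt * |A| / Δx * F (i + isign A) j k
        + Δt * |B| / Δy * F i (j + isign B) k
        + Δt * (|ω| * W) / Δθ * F i j (k + isign ω) := by
    intro F
    rw [upwindD]
    simp only [← hA, ← hB, hC]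
    field_simp
    ring
  rw [expand U, expand V]
  exact add_le_add (add_le_add (add_le_add e0 e1) e2) e3

theorem upwind_update_monotone_aux (W d θk Δx Δy Δθ Δt : ℝ)
    (hW : 0 < W) (hd : 0 < d) (hΔx : 0 < Δx) (hΔy : 0 < Δy) (hΔθ : 0 < Δθ) (hΔt : 0 < Δt)
    (hCFL : Δt * ((1 + W * d) / Δx + (1 + W * d) / Δy + W / Δθ) ≤ 1)
    (U V : ℤ → ℤ → ℤ → ℝ) (hUV : ∀ i j k, U i j k ≤ V i j k) (i j k : ℤ) :
    U i j k + Δt * (1 + sInf {z : ℝ | ∃ v ∈ ({-1, 0, 1} : Set ℝ), ∃ ω ∈ ({-1, 0, 1} : Set ℝ),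
      z = upwindD W d θk Δx Δy Δθ U i j k v ω}) ≤
    V i j k + Δt * (1 + sInf {z : ℝ | ∃ v ∈ ({-1, 0, 1} : Set ℝ), ∃ ω ∈ ({-1, 0, 1} : Set ℝ),
      z = upwindD W d θk Δx Δy Δθ V i j k v ω}) := by
  set SU := {z : ℝ | ∃ v ∈ ({-1, 0, 1} : Set ℝ), ∃ ω ∈ ({-1, 0, 1} : Set ℝ),
      z = upwindD W d θk Δx Δy Δθ U i j k v ω} with hSU
  set SV := {z : ℝ | ∃ v ∈ ({-1, 0, 1} : Set ℝ), ∃ ω ∈ ({-1, 0, 1} : Set ℝ),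
      z = upwindD W d θk Δx Δy Δθ V i j k v ω} with hSV
  have hfin : ∀ F : ℤ → ℤ → ℤ → ℝ, ({z : ℝ | ∃ v ∈ ({-1, 0, 1} : Set ℝ),
      ∃ ω ∈ ({-1, 0, 1} : Set ℝ), z = upwindD W d θk Δx Δy Δθ F i j k v ω}).Finite := by
    intro F
    have hsub : {z : ℝ | ∃ v ∈ ({-1, 0, 1} : Set ℝ), ∃ ω ∈ ({-1, 0, 1} : Set ℝ),
        z = upwindD W d θk Δx Δy Δθ F i j k v ω} ⊆
        (fun p : ℝ × ℝ => upwindD W d θk Δx Δy Δθ F i j k p.1 p.2) ''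
          (({-1, 0, 1} : Set ℝ) ×ˢ ({-1, 0, 1} : Set ℝ)) := by
      rintro z ⟨v, hv, ω, hω, rfl⟩
      exact ⟨(v, ω), ⟨hv, hω⟩, rfl⟩
    exact (Set.Finite.image _ (Set.Finite.prod (Set.toFinite _) (Set.toFinite _))).subset hsub
  have hne : ∀ F : ℤ → ℤ → ℤ → ℝ, ({z : ℝ | ∃ v ∈ ({-1, 0, 1} : Set ℝ),
      ∃ ω ∈ ({-1, 0, 1} : Set ℝ), z = upwindD W d θk Δx Δy Δθ F i j k v ω}).Nonempty := by
    intro F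
    exact ⟨upwindD W d θk Δx Δy Δθ F i j k 0 0, 0, by simp, 0, by simp, rfl⟩
  have hbdd : BddBelow SU := (hfin U).bddBelow
  have key : sInf SU - (V i j k - U i j k) / Δt ≤ sInf SV := by
    apply le_csInf (hne V)
    rintro z ⟨v, hv, ω, hω, rfl⟩
    have hv1 : |v| ≤ 1 := by
      rcases hv with h | h | h <;> simp_all <;> norm_num
    have hω1 : |ω| ≤ 1 := by
      rcases hω with h | h | h <;> simp_all <;> norm_num
    have h1 : sInf SU ≤ upwindD W d θk Δx Δy Δθ U i j k v ω :=
      csInf_le hbdd ⟨v, hv, ω, hω, rfl⟩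
    have h2 := upwind_key W d θk Δx Δy Δθ Δt hW hd hΔx hΔy hΔθ hΔt hCFL U V hUV i j k v ω hv1 hω1
    have h3 : upwindD W d θk Δx Δy Δθ U i j k v ω - upwindD W d θk Δx Δy Δθ V i j k v ω ≤
        (V i j k - U i j k) / Δt := by
      rw [le_div_iff₀ hΔt]; linarith
    linarith
  have h4 : Δt * (sInf SU - (V i j k - U i j k) / Δt) ≤ Δt * sInf SV :=
    mul_le_mul_of_nonneg_left key hΔt.le
  have h5 : Δt * ((V i j k - U i j k) / Δt) = V i j k - U i j k := by
    field_simp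
  nlinarith [h4, h5]

/-- under the CFL condition Δt((1+Wd)/Δx + (1+Wd)/Δy + W/Δθ) ≤ 1,
the upwind update is monotone: increasing any of the input grid values u^{n+1} does not
decrease the output u^n_{ijk}. -/
theorem upwind_update_monotone (W d θk Δx Δy Δθ Δt : ℝ)
    (hW : 0 < W) (hd : 0 < d) (hΔx : 0 < Δx) (hΔy : 0 < Δy) (hΔθ : 0 < Δθ) (hΔt : 0 < Δt)
    (hCFL : Δt * ((1 + W * d) / Δx + (1 + W * d) / Δy + W / Δθ) ≤ 1)
    (U V : ℤ → ℤ → ℤ → ℝ) (hUV : ∀ i j k, U i j k ≤ V i j k) (i j k : ℤ) :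
    upwindUpdate W d θk Δx Δy Δθ Δt U i j k ≤ upwindUpdate W d θk Δx Δy Δθ Δt V i j k := by
  unfold upwindUpdate
  exact upwind_update_monotone_aux W d θk Δx Δy Δθ Δt hW hd hΔx hΔy hΔθ hΔt hCFL U V hUV i j k
end

section
/- Any configuration (x, y, θ) can be reached from any other configuration (x₀, y₀, θ₀) in the obstacle-free plane: the kinematic system with controls v, ω ∈ [−1,1] is completely controllable. -/
/-!
The point `p = (x - d cos θ, y - d sin θ)` obeys `ṗ = v (cos θ, sin θ)` and `θ̇ = ω W`: with `v = 0`
the vehicle turns about `p`, with `ω = 0` it translates `p` along its heading. Turning towards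
`p₁ - p₀`, driving straight to `p₁` and turning to `θ₁` therefore reaches the target. Each manoeuvre
is driven by a control `k (1 - cos (2π t / T)) / 2`, which vanishes at both ends, so consecutive
manoeuvres glue into one trajectory that is differentiable everywhere.
-/

open Real

/-- The controls v, ω are admissible: measurable and valued in [−1,1]. -/
def AdmissibleControl (v ω : ℝ → ℝ) : Prop :=
  Measurable v ∧ Measurable ω ∧ ∀ s, v s ∈ Set.Icc (-1 : ℝ) 1 ∧ ω s ∈ Set.Icc (-1 : ℝ) 1

/-- (x,y,θ) solves the kinematic equations with controls (v,ω). -/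
def KinematicTraj (W d : ℝ) (v ω x y θ : ℝ → ℝ) : Prop :=
  (∀ s, HasDerivAt x (v s * Real.cos (θ s) - ω s * W * d * Real.sin (θ s)) s) ∧
  (∀ s, HasDerivAt y (v s * Real.sin (θ s) + ω s * W * d * Real.cos (θ s)) s) ∧
  (∀ s, HasDerivAt θ (ω s * W) s)

/-- The optimal travel time function (valued in [0,∞]): the infimum over admissible
controls of the first arrival time minus t for trajectories starting at (x₀,y₀,θ₀)
at time t and reaching the target (xf,yf,θf) by the horizon time T; +∞ if the target
cannot be reached. -/
noncomputable def travelTime (W d T xf yf θf : ℝ) (x₀ y₀ θ₀ t : ℝ) : ENNReal :=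
  sInf {c : ENNReal | ∃ δ : ℝ, 0 ≤ δ ∧ t + δ ≤ T ∧ c = ENNReal.ofReal δ ∧
    ∃ v ω x y θ : ℝ → ℝ, AdmissibleControl v ω ∧ KinematicTraj W d v ω x y θ ∧
      x t = x₀ ∧ y t = y₀ ∧ θ t = θ₀ ∧
      x (t + δ) = xf ∧ y (t + δ) = yf ∧ θ (t + δ) = θf}

def RestToRestReachable (W d : ℝ) (c₀ c₁ : ℝ × ℝ × ℝ) : Prop :=
  ∃ T, 0 < T ∧ ∃ v ω x y θ : ℝ → ℝ, AdmissibleControl v ω ∧ KinematicTraj W d v ω x y θ ∧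
    v 0 = 0 ∧ ω 0 = 0 ∧ v T = 0 ∧ ω T = 0 ∧ (x 0, y 0, θ 0) = c₀ ∧ (x T, y T, θ T) = c₁

noncomputable def concatAt (T : ℝ) (f g : ℝ → ℝ) : ℝ → ℝ :=
  fun t => if t ≤ T then f t else g (t - T)

section concatAt

variable {T : ℝ} {f g f' g' : ℝ → ℝ}

lemma concatAt_of_le {t : ℝ} (h : t ≤ T) : concatAt T f g t = f t := if_pos h

lemma concatAt_add {s : ℝ} (hs : 0 < s) : concatAt T f g (T + s) = g s := by
  simp [concatAt, hs]

lemma Measurable.concatAt (hf : Measurable f) (hg : Measurable g) :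
    Measurable (concatAt T f g) :=
  Measurable.ite measurableSet_Iic hf (hg.comp (measurable_id.sub_const T))

lemma hasDerivAt_concatAt (hf : ∀ s, HasDerivAt f (f' s) s) (hg : ∀ s, HasDerivAt g (g' s) s)
    (hval : f T = g 0) (hder : f' T = g' 0) (s : ℝ) :
    HasDerivAt (concatAt T f g) (concatAt T f' g' s) s := by
  have hg' : ∀ s, HasDerivAt (fun t => g (t - T)) (g' (s - T)) s := fun s =>
    (hg (s - T)).comp_sub_const s T
  rcases lt_trichotomy s T with hs | rfl | hs
  · rw [concatAt_of_le hs.le]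
    refine (hf s).congr_of_eventuallyEq ?_
    filter_upwards [Iio_mem_nhds hs] with t ht
    exact concatAt_of_le (le_of_lt ht)
  · rw [concatAt_of_le le_rfl]
    have hleft : HasDerivWithinAt (concatAt s f g) (f' s) (Set.Iic s) s :=
      (hf s).hasDerivWithinAt.congr (fun t ht => concatAt_of_le ht) (concatAt_of_le le_rfl)
    have hright : HasDerivWithinAt (concatAt s f g) (g' (s - s)) (Set.Ici s) s := by
      refine (hg' s).hasDerivWithinAt.congr (fun t ht => ?_) (by simp [concatAt, hval])
      rcases (Set.mem_Ici.mp ht).eq_or_lt with rfl | hlt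
      · simp [concatAt, hval]
      · simp [concatAt, not_le.mpr hlt]
    rw [sub_self, ← hder] at hright
    simpa [Set.Iic_union_Ici] using hleft.union hright
  · rw [concatAt, if_neg (not_le.mpr hs)]
    refine (hg' s).congr_of_eventuallyEq ?_
    filter_upwards [Ioi_mem_nhds hs] with t ht
    simp [concatAt, not_le.mpr (Set.mem_Ioi.mp ht)]

end concatAt

noncomputable def bumpRate (T t : ℝ) : ℝ := (1 - cos (2 * π * t / T)) / 2

noncomputable def bumpIntegral (T t : ℝ) : ℝ := (t - T / (2 * π) * sin (2 * π * t / T)) / 2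

lemma hasDerivAt_bumpIntegral {T : ℝ} (hT : T ≠ 0) (t : ℝ) :
    HasDerivAt (bumpIntegral T) (bumpRate T t) t := by
  have hphase : HasDerivAt (fun s => 2 * π * s / T) (2 * π / T) t := by
    simpa using ((hasDerivAt_id t).const_mul (2 * π)).div_const T
  refine (((hasDerivAt_id t).sub (hphase.sin.const_mul (T / (2 * π)))).div_const 2).congr_deriv ?_
  simp only [bumpRate]
  field_simp

lemma bumpRate_mem_Icc (T t : ℝ) : bumpRate T t ∈ Set.Icc 0 1 := by
  have := neg_one_le_cos (2 * π * t / T)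
  have := cos_le_one (2 * π * t / T)
  constructor <;> unfold bumpRate <;> linarith

lemma bumpRate_zero (T : ℝ) : bumpRate T 0 = 0 := by simp [bumpRate]

lemma bumpRate_self {T : ℝ} (hT : T ≠ 0) : bumpRate T T = 0 := by
  simp [bumpRate, mul_div_assoc, div_self hT]

lemma bumpIntegral_zero (T : ℝ) : bumpIntegral T 0 = 0 := by simp [bumpIntegral]

lemma bumpIntegral_self {T : ℝ} (hT : T ≠ 0) : bumpIntegral T T = T / 2 := by
  simp [bumpIntegral, mul_div_assoc, div_self hT]

lemma exists_restToRest_integrator (D : ℝ) :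
    ∃ T > 0, ∃ u U : ℝ → ℝ, Measurable u ∧ (∀ t, u t ∈ Set.Icc (-1) 1) ∧ u 0 = 0 ∧ u T = 0 ∧
      (∀ t, HasDerivAt U (u t) t) ∧ U 0 = 0 ∧ U T = D := by
  set T := 2 * |D| + 1 with hT_def
  have hT : 0 < T := by positivity
  set k := 2 * D / T
  have hk : |k| ≤ 1 := by
    rw [abs_div, abs_of_pos hT, div_le_one hT, abs_mul, abs_two]
    linarith
  refine ⟨T, hT, fun t => k * bumpRate T t, fun t => k * bumpIntegral T t,
    (Continuous.measurable (by unfold bumpRate; fun_prop)), fun t => ?_,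
    by simp [bumpRate_zero], by simp [bumpRate_self hT.ne'],
    fun t => (hasDerivAt_bumpIntegral hT.ne' t).const_mul k, by simp [bumpIntegral_zero], ?_⟩
  · obtain ⟨h0, h1⟩ := bumpRate_mem_Icc T t
    obtain ⟨hk₁, hk₂⟩ := abs_le.mp hk
    constructor <;> nlinarith
  · simp only [bumpIntegral_self hT.ne', k]
    field_simp

lemma kinematicTraj_of_axle {W d : ℝ} {v ω p q θ : ℝ → ℝ}
    (hp : ∀ s, HasDerivAt p (v s * cos (θ s)) s) (hq : ∀ s, HasDerivAt q (v s * sin (θ s)) s)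
    (hθ : ∀ s, HasDerivAt θ (ω s * W) s) :
    KinematicTraj W d v ω (fun t => p t + d * cos (θ t)) (fun t => q t + d * sin (θ t)) θ := by
  refine ⟨fun s => ?_, fun s => ?_, hθ⟩
  · exact ((hp s).add (((hθ s).cos).const_mul d)).congr_deriv (by ring)
  · exact ((hq s).add (((hθ s).sin).const_mul d)).congr_deriv (by ring)

theorem RestToRestReachable.trans {W d : ℝ} {c₀ c₁ c₂ : ℝ × ℝ × ℝ}
    (h₁ : RestToRestReachable W d c₀ c₁) (h₂ : RestToRestReachable W d c₁ c₂) :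
    RestToRestReachable W d c₀ c₂ := by
  obtain ⟨T₁, hT₁, v₁, ω₁, x₁, y₁, θ₁, ⟨hv₁, hω₁, hb₁⟩, ⟨hx₁, hy₁, hθ₁⟩,
    hv₁0, hω₁0, hv₁T, hω₁T, hs₁, he₁⟩ := h₁
  obtain ⟨T₂, hT₂, v₂, ω₂, x₂, y₂, θ₂, ⟨hv₂, hω₂, hb₂⟩, ⟨hx₂, hy₂, hθ₂⟩,
    hv₂0, hω₂0, hv₂T, hω₂T, hs₂, he₂⟩ := h₂
  have hjoin := he₁.trans hs₂.symm
  simp only [Prod.mk.injEq] at hjoin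
  obtain ⟨hx, hy, hθ⟩ := hjoin
  have hb : ∀ s, concatAt T₁ v₁ v₂ s ∈ Set.Icc (-1) 1 ∧ concatAt T₁ ω₁ ω₂ s ∈ Set.Icc (-1) 1 :=
    fun s => by simp only [concatAt]; split_ifs; exacts [hb₁ s, hb₂ _]
  refine ⟨T₁ + T₂, by positivity, concatAt T₁ v₁ v₂, concatAt T₁ ω₁ ω₂, concatAt T₁ x₁ x₂,
    concatAt T₁ y₁ y₂, concatAt T₁ θ₁ θ₂, ⟨hv₁.concatAt hv₂, hω₁.concatAt hω₂, hb⟩,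
    ⟨fun s => ?_, fun s => ?_, fun s => ?_⟩, ?_⟩
  · convert hasDerivAt_concatAt hx₁ hx₂ hx (by simp [hv₁T, hω₁T, hv₂0, hω₂0]) s using 1
    by_cases hs : s ≤ T₁ <;> simp [concatAt, hs]
  · convert hasDerivAt_concatAt hy₁ hy₂ hy (by simp [hv₁T, hω₁T, hv₂0, hω₂0]) s using 1
    by_cases hs : s ≤ T₁ <;> simp [concatAt, hs]
  · convert hasDerivAt_concatAt hθ₁ hθ₂ hθ (by simp [hω₁T, hω₂0]) s using 1
    by_cases hs : s ≤ T₁ <;> simp [concatAt, hs]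
  simp only [concatAt_of_le hT₁.le, concatAt_add hT₂]
  exact ⟨hv₁0, hω₁0, hv₂T, hω₂T, hs₁, he₂⟩

lemma restToRest_rotate {W : ℝ} (hW : W ≠ 0) (d px py θ₀ θ₁ : ℝ) :
    RestToRestReachable W d (px + d * cos θ₀, py + d * sin θ₀, θ₀)
      (px + d * cos θ₁, py + d * sin θ₁, θ₁) := by
  obtain ⟨T, hT, u, U, hu, hu_mem, hu0, huT, hU, hU0, hUT⟩ :=
    exists_restToRest_integrator ((θ₁ - θ₀) / W)
  have hθ : ∀ s, HasDerivAt (fun t => θ₀ + W * U t) (u s * W) s := fun s =>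
    (((hU s).const_mul W).const_add θ₀).congr_deriv (mul_comm _ _)
  refine ⟨T, hT, 0, u, _, _, _, ⟨measurable_const, hu, fun s => ⟨by simp, hu_mem s⟩⟩,
    kinematicTraj_of_axle (p := fun _ => px) (q := fun _ => py)
      (fun s => by simpa using hasDerivAt_const s px)
      (fun s => by simpa using hasDerivAt_const s py)
      hθ, rfl, hu0, rfl, huT, by simp [hU0], by simp [hUT, mul_div_cancel₀ _ hW]⟩

lemma restToRest_straight (W d px py φ D : ℝ) :
    RestToRestReachable W d (px + d * cos φ, py + d * sin φ, φ)
      (px + D * cos φ + d * cos φ, py + D * sin φ + d * sin φ, φ) := by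
  obtain ⟨T, hT, u, U, hu, hu_mem, hu0, huT, hU, hU0, hUT⟩ := exists_restToRest_integrator D
  refine ⟨T, hT, u, 0, _, _, _, ⟨hu, measurable_const, fun s => ⟨hu_mem s, by simp⟩⟩,
    kinematicTraj_of_axle (p := fun t => px + U t * cos φ) (q := fun t => py + U t * sin φ)
      (fun s => ((hU s).mul_const _).const_add px) (fun s => ((hU s).mul_const _).const_add py)
      (fun s => by simpa using hasDerivAt_const s φ),
    hu0, rfl, huT, rfl, by simp [hU0], by simp [hUT]⟩

theorem complete_controllability_general (W d : ℝ) (hW : 0 < W)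
    (x₀ y₀ θ₀ x₁ y₁ θ₁ : ℝ) :
    ∃ T : ℝ, 0 < T ∧ ∃ v ω x y θ : ℝ → ℝ,
      AdmissibleControl v ω ∧ KinematicTraj W d v ω x y θ ∧
      x 0 = x₀ ∧ y 0 = y₀ ∧ θ 0 = θ₀ ∧
      x T = x₁ ∧ y T = y₁ ∧ ∃ m : ℤ, θ T = θ₁ + 2 * Real.pi * m := by
  have hreach : RestToRestReachable W d (x₀, y₀, θ₀) (x₁, y₁, θ₁) := by
    let z : ℂ := ⟨(x₁ - d * cos θ₁) - (x₀ - d * cos θ₀), (y₁ - d * sin θ₁) - (y₀ - d * sin θ₀)⟩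
    have hre : x₀ - d * cos θ₀ + ‖z‖ * cos z.arg = x₁ - d * cos θ₁ := by
      rw [Complex.norm_mul_cos_arg]; ring
    have him : y₀ - d * sin θ₀ + ‖z‖ * sin z.arg = y₁ - d * sin θ₁ := by
      rw [Complex.norm_mul_sin_arg]; ring
    have hturn₁ := restToRest_rotate hW.ne' d (x₀ - d * cos θ₀) (y₀ - d * sin θ₀) θ₀ z.arg
    have hdrive := restToRest_straight W d (x₀ - d * cos θ₀) (y₀ - d * sin θ₀) z.arg ‖z‖
    have hturn₂ := restToRest_rotate hW.ne' d (x₁ - d * cos θ₁) (y₁ - d * sin θ₁) z.arg θ₁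
    rw [hre, him] at hdrive
    simpa only [sub_add_cancel] using hturn₁.trans (hdrive.trans hturn₂)
  obtain ⟨T, hT, v, ω, x, y, θ, hadm, htraj, -, -, -, -, hstart, hend⟩ := hreach
  simp only [Prod.mk.injEq] at hstart hend
  exact ⟨T, hT, v, ω, x, y, θ, hadm, htraj, hstart.1, hstart.2.1, hstart.2.2, hend.1, hend.2.1,
    0, by simp [hend.2.2]⟩

/-- complete controllability — any configuration (x₁,y₁,θ₁) (with angle
understood mod 2π) can be reached from any configuration (x₀,y₀,θ₀) in finite time. -/
theorem complete_controllability (W d : ℝ) (hW : 0 < W) (hd : 0 < d)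
    (x₀ y₀ θ₀ x₁ y₁ θ₁ : ℝ) :
    ∃ T : ℝ, 0 < T ∧ ∃ v ω x y θ : ℝ → ℝ,
      AdmissibleControl v ω ∧ KinematicTraj W d v ω x y θ ∧
      x 0 = x₀ ∧ y 0 = y₀ ∧ θ 0 = θ₀ ∧
      x T = x₁ ∧ y T = y₁ ∧ ∃ m : ℤ, θ T = θ₁ + 2 * Real.pi * m :=
  complete_controllability_general W d hW x₀ y₀ θ₀ x₁ y₁ θ₁
end
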